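/- Quadratic energy gap from convexity: let f ∈ Γ^k_{M,J} with ∫∫ √(1+|p|²) f dp dx < ∞, and let φ, ψ be potentials with E_kin(f,φ) < ∞ and E_kin(f,ψ) < ∞. Assume ψ satisfies the weak Euler–Lagrange identity tested against φ−ψ: ∫_{ℝ³} ∇ψ·(∇φ−∇ψ) dx = −∫_{ℝ³}∫_{ℝ³} e^{2ψ(x)} (e^{2ψ(x)}+|p|²)^{-1/2} f(x,p) (φ(x)−ψ(x)) dp dx, where both sides are finite. Then 𝓔(f,φ) − 𝓔(f,ψ) ≥ (1/2)‖∇φ−∇ψ‖²_{L²(ℝ³)}. -/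

import Mathlib

open MeasureTheory Real Filter Topology
open scoped ENNReal

noncomputable section

/-- Euclidean 3-space. -/
abbrev E3 := EuclideanSpace ℝ (Fin 3)

/-- `φ` belongs to (a C¹ surrogate of) the space `D¹(ℝ³)`: it is continuously
differentiable, its gradient is square integrable and it vanishes at infinity in
the sense that `{|φ| > a}` has finite measure for every `a > 0`. -/
def IsPotential (φ : E3 → ℝ) : Prop :=
  ContDiff ℝ 1 φ ∧ (∫⁻ x : E3, ENNReal.ofReal (‖gradient φ x‖ ^ 2)) < ⊤ ∧
    ∀ a : ℝ, 0 < a → volume {x : E3 | a < |φ x|} < ⊤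

/-- `f ∈ Γ^k_{M,J}`: `f` is measurable, a.e. nonnegative, with `‖f‖_{L¹} = M` and
`‖f‖_{L^{1+1/k}} ≤ J` (in particular `f ∈ L¹ ∩ L^{1+1/k}`). -/
def InGamma (k M J : ℝ) (f : E3 → E3 → ℝ) : Prop :=
  Measurable (Function.uncurry f) ∧
  (∀ᵐ z : E3 × E3, 0 ≤ f z.1 z.2) ∧
  (∫⁻ z : E3 × E3, ENNReal.ofReal (f z.1 z.2)) = ENNReal.ofReal M ∧
  eLpNorm (Function.uncurry f) (ENNReal.ofReal (1 + 1/k)) volume ≤ ENNReal.ofReal J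

/-- Kinetic energy `E_kin(f,φ) = ∫∫ √(e^{2φ(x)}+|p|²) f(x,p) dp dx` (value in `[0,∞]`). -/
def kinE (f : E3 → E3 → ℝ) (φ : E3 → ℝ) : ℝ≥0∞ :=
  ∫⁻ z : E3 × E3, ENNReal.ofReal (Real.sqrt (Real.exp (2 * φ z.1) + ‖z.2‖ ^ 2) * f z.1 z.2)

/-- Energy functional `𝓔(f,φ) = E_kin(f,φ) + (1/2)∫ |∇φ|²` (value in `[0,∞]`). -/
def energy (f : E3 → E3 → ℝ) (φ : E3 → ℝ) : ℝ≥0∞ :=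
  kinE f φ + (∫⁻ x : E3, ENNReal.ofReal (‖gradient φ x‖ ^ 2)) / 2

/-- `(f,φ)` is admissible: `f ∈ Γ^k_{M,J}`, `φ` is a potential and
`∫∫ √(1+|p|²) f dp dx < ∞`. -/
def Admissible (k M J : ℝ) (f : E3 → E3 → ℝ) (φ : E3 → ℝ) : Prop :=
  InGamma k M J f ∧ IsPotential φ ∧
  (∫⁻ z : E3 × E3, ENNReal.ofReal (Real.sqrt (1 + ‖z.2‖ ^ 2) * f z.1 z.2)) < ⊤

/-- The energy infimum `I^k_{M,J} = inf {𝓔(f,φ) : (f,φ) admissible}`. -/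
def energyInf (k M J : ℝ) : ℝ≥0∞ :=
  sInf { e : ℝ≥0∞ | ∃ f φ, Admissible k M J f φ ∧ e = energy f φ }

/-!
The map `u ↦ √(e^{2u} + |p|²)` is convex, so it lies above its tangent line at `ψ(x)`;
integrating this against `f` bounds `E_kin(f,φ) - E_kin(f,ψ)` from below by the right-hand
side of the Euler–Lagrange identity, i.e. by `-∫ ∇ψ·(∇φ-∇ψ)`. Expanding
`‖∇φ‖² = ‖∇ψ‖² + 2 ∇ψ·(∇φ-∇ψ) + ‖∇φ-∇ψ‖²` then turns the field-energy difference into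
`∫ ∇ψ·(∇φ-∇ψ) + (1/2)‖∇φ-∇ψ‖²`, and the cross terms cancel.
-/

open InnerProductSpace

lemma sqrt_exp_add_tangent_le (a b : ℝ) {c : ℝ} (hc : 0 ≤ c) :
    √(exp (2 * b) + c) + exp (2 * b) / √(exp (2 * b) + c) * (a - b) ≤ √(exp (2 * a) + c) := by
  set s := √(exp (2 * b) + c)
  have hs : 0 < s := by positivity
  have hs_sq : s ^ 2 = exp (2 * b) + c := sq_sqrt (by positivity)
  have hlin : exp (2 * b) * (a - b + 1) ≤ exp (a + b) :=
    calc exp (2 * b) * (a - b + 1) ≤ exp (2 * b) * exp (a - b) := by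
          gcongr; exact add_one_le_exp _
      _ = exp (a + b) := by rw [← exp_add]; ring_nf
  -- Cauchy–Schwarz for the vectors `(e^a, √c)` and `(e^b, √c)`
  have hcs : exp (a + b) + c ≤ √(exp (2 * a) + c) * s := by
    rw [← sqrt_mul (by positivity), le_sqrt (by positivity) (by positivity), two_mul, two_mul,
      exp_add, exp_add, exp_add]
    nlinarith [sq_nonneg (exp a - exp b)]
  have hrw : s + exp (2 * b) / s * (a - b) = (s ^ 2 + exp (2 * b) * (a - b)) / s := by
    field_simp
  rw [hrw, div_le_iff₀ hs]
  linarith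

lemma measurable_gradient {F : Type*} [NormedAddCommGroup F] [InnerProductSpace ℝ F]
    [CompleteSpace F] [MeasurableSpace F] [BorelSpace F] (φ : F → ℝ) :
    Measurable (gradient φ) :=
  (toDual ℝ F).symm.continuous.measurable.comp (measurable_fderiv ℝ φ)

lemma IsPotential.integrable_norm_gradient_sq {φ : E3 → ℝ} (hφ : IsPotential φ) :
    Integrable (fun x => ‖gradient φ x‖ ^ 2) := by
  rw [← lintegral_ofReal_ne_top_iff_integrable
    ((measurable_gradient φ).norm.pow_const 2).aestronglyMeasurable
    (.of_forall fun _ => by positivity)]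
  exact hφ.2.1.ne

lemma integral_norm_sub_sq_eq {α F : Type*} [MeasurableSpace α] {μ : Measure α}
    [NormedAddCommGroup F] [InnerProductSpace ℝ F] {u w : α → F}
    (hu : Integrable (fun x => ‖u x‖ ^ 2) μ) (hw : Integrable (fun x => ‖w x‖ ^ 2) μ)
    (huw : Integrable (fun x => inner ℝ (u x) (w x - u x)) μ) :
    ∫ x, ‖w x - u x‖ ^ 2 ∂μ
      = ∫ x, ‖w x‖ ^ 2 ∂μ - ∫ x, ‖u x‖ ^ 2 ∂μ - 2 * ∫ x, inner ℝ (u x) (w x - u x) ∂μ := by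
  have hpt : ∀ x, ‖w x - u x‖ ^ 2 = ‖w x‖ ^ 2 - ‖u x‖ ^ 2 - 2 * inner ℝ (u x) (w x - u x) := by
    intro x
    have := norm_add_sq_real (u x) (w x - u x)
    rw [add_sub_cancel] at this
    linarith
  have hwu : Integrable (fun x => ‖w x‖ ^ 2 - ‖u x‖ ^ 2) μ := hw.sub hu
  simp_rw [hpt]
  rw [integral_sub hwu (huw.const_mul 2), integral_sub hw hu, integral_const_mul]

def kinDensity (f : E3 → E3 → ℝ) (φ : E3 → ℝ) (z : E3 × E3) : ℝ :=
  √(exp (2 * φ z.1) + ‖z.2‖ ^ 2) * f z.1 z.2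

section Kinetic

variable {f : E3 → E3 → ℝ}

lemma kinDensity_ae_nonneg (hf : ∀ᵐ z : E3 × E3, 0 ≤ f z.1 z.2) (φ : E3 → ℝ) :
    0 ≤ᵐ[volume] kinDensity f φ := by
  filter_upwards [hf] with z hz
  exact mul_nonneg (sqrt_nonneg _) hz

lemma integrable_kinDensity (hfm : Measurable (Function.uncurry f))
    (hf : ∀ᵐ z : E3 × E3, 0 ≤ f z.1 z.2) {φ : E3 → ℝ} (hφ : Measurable φ)
    (hkin : kinE f φ < ⊤) : Integrable (kinDensity f φ) := by
  have hmeas : Measurable (kinDensity f φ) := by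
    unfold kinDensity
    fun_prop
  exact (lintegral_ofReal_ne_top_iff_integrable hmeas.aestronglyMeasurable
    (kinDensity_ae_nonneg hf φ)).1 hkin.ne

lemma energy_eq_ofReal (hf : ∀ᵐ z : E3 × E3, 0 ≤ f z.1 z.2) {φ : E3 → ℝ}
    (hkin : Integrable (kinDensity f φ)) (hgrad : Integrable (fun x => ‖gradient φ x‖ ^ 2)) :
    energy f φ = ENNReal.ofReal ((∫ z, kinDensity f φ z) + (∫ x, ‖gradient φ x‖ ^ 2) / 2) := by
  have hkin0 : 0 ≤ ∫ z, kinDensity f φ z := integral_nonneg_of_ae (kinDensity_ae_nonneg hf φ)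
  have hgrad0 : 0 ≤ ∫ x, ‖gradient φ x‖ ^ 2 := integral_nonneg fun _ => by positivity
  rw [energy, show kinE f φ = ∫⁻ z, ENNReal.ofReal (kinDensity f φ z) from rfl, ← ofReal_integral_eq_lintegral_ofReal hkin (kinDensity_ae_nonneg hf φ),
    ← ofReal_integral_eq_lintegral_ofReal hgrad (.of_forall fun _ => by positivity),
    ENNReal.ofReal_add hkin0 (by positivity), ENNReal.ofReal_div_of_pos two_pos,
    ENNReal.ofReal_ofNat]

lemma integral_kinDensity_add_le (hf : ∀ᵐ z : E3 × E3, 0 ≤ f z.1 z.2) {φ ψ : E3 → ℝ}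
    (hψ : Integrable (kinDensity f ψ)) (hφ : Integrable (kinDensity f φ))
    (hR : Integrable (fun z : E3 × E3 =>
      exp (2 * ψ z.1) / √(exp (2 * ψ z.1) + ‖z.2‖ ^ 2) * f z.1 z.2 * (φ z.1 - ψ z.1))) :
    (∫ z, kinDensity f ψ z)
        + (∫ z : E3 × E3,
          exp (2 * ψ z.1) / √(exp (2 * ψ z.1) + ‖z.2‖ ^ 2) * f z.1 z.2 * (φ z.1 - ψ z.1))
      ≤ ∫ z, kinDensity f φ z := by
  rw [← integral_add hψ hR]
  refine integral_mono_ae (hψ.add hR) hφ ?_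
  filter_upwards [hf] with z hz
  calc kinDensity f ψ z
        + exp (2 * ψ z.1) / √(exp (2 * ψ z.1) + ‖z.2‖ ^ 2) * f z.1 z.2 * (φ z.1 - ψ z.1)
      = (√(exp (2 * ψ z.1) + ‖z.2‖ ^ 2)
          + exp (2 * ψ z.1) / √(exp (2 * ψ z.1) + ‖z.2‖ ^ 2) * (φ z.1 - ψ z.1)) * f z.1 z.2 := by
        unfold kinDensity; ring
    _ ≤ kinDensity f φ z :=
        mul_le_mul_of_nonneg_right (sqrt_exp_add_tangent_le _ _ (by positivity)) hz

end Kinetic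

theorem energy_gap_quadratic_general (k M J : ℝ)
    (f : E3 → E3 → ℝ) (φ ψ : E3 → ℝ)
    (hf : InGamma k M J f)
    (hφ : IsPotential φ) (hψ : IsPotential ψ)
    (hkinφ : kinE f φ < ⊤) (hkinψ : kinE f ψ < ⊤)
    (hintR : Integrable (fun z : E3 × E3 =>
      Real.exp (2 * ψ z.1) / Real.sqrt (Real.exp (2 * ψ z.1) + ‖z.2‖ ^ 2)
        * f z.1 z.2 * (φ z.1 - ψ z.1)) volume)
    (hintL : Integrable (fun x : E3 =>
      (inner ℝ (gradient ψ x) (gradient φ x - gradient ψ x) : ℝ)) volume)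
    (hEL : (∫ x : E3, (inner ℝ (gradient ψ x) (gradient φ x - gradient ψ x) : ℝ))
      = - ∫ z : E3 × E3,
          Real.exp (2 * ψ z.1) / Real.sqrt (Real.exp (2 * ψ z.1) + ‖z.2‖ ^ 2)
            * f z.1 z.2 * (φ z.1 - ψ z.1)) :
    energy f ψ + ENNReal.ofReal ((1/2) * ∫ x : E3, ‖gradient φ x - gradient ψ x‖ ^ 2)
      ≤ energy f φ := by
  obtain ⟨hfm, hf0, -, -⟩ := hf
  have hKφ := integrable_kinDensity hfm hf0 hφ.1.continuous.measurable hkinφ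
  have hKψ := integrable_kinDensity hfm hf0 hψ.1.continuous.measurable hkinψ
  have hGφ := hφ.integrable_norm_gradient_sq
  have hGψ := hψ.integrable_norm_gradient_sq
  have hconvex := integral_kinDensity_add_le hf0 hKψ hKφ hintR
  have hexpand := integral_norm_sub_sq_eq hGψ hGφ hintL
  have hD0 : 0 ≤ ∫ x, ‖gradient φ x - gradient ψ x‖ ^ 2 := integral_nonneg fun _ => by positivity
  have hψ0 : 0 ≤ (∫ z, kinDensity f ψ z) + (∫ x, ‖gradient ψ x‖ ^ 2) / 2 :=
    add_nonneg (integral_nonneg_of_ae (kinDensity_ae_nonneg hf0 ψ))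
      (div_nonneg (integral_nonneg fun _ => by positivity) zero_le_two)
  rw [energy_eq_ofReal hf0 hKφ hGφ, energy_eq_ofReal hf0 hKψ hGψ,
    ← ENNReal.ofReal_add hψ0 (by positivity)]
  exact ENNReal.ofReal_le_ofReal (by linarith)

/-- quadratic energy gap from convexity.  If `ψ` satisfies the weak
Euler–Lagrange identity tested against `φ − ψ`, then
`𝓔(f,φ) − 𝓔(f,ψ) ≥ (1/2)‖∇φ − ∇ψ‖²_{L²}`. -/
theorem energy_gap_quadratic (k M J : ℝ)
    (hk : 0 < k) (hk2 : k < 2) (hM : 0 < M) (hJ : 0 < J)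
    (f : E3 → E3 → ℝ) (φ ψ : E3 → ℝ)
    (hf : InGamma k M J f)
    (hfin : (∫⁻ z : E3 × E3, ENNReal.ofReal (Real.sqrt (1 + ‖z.2‖ ^ 2) * f z.1 z.2)) < ⊤)
    (hφ : IsPotential φ) (hψ : IsPotential ψ)
    (hkinφ : kinE f φ < ⊤) (hkinψ : kinE f ψ < ⊤)
    (hintR : Integrable (fun z : E3 × E3 =>
      Real.exp (2 * ψ z.1) / Real.sqrt (Real.exp (2 * ψ z.1) + ‖z.2‖ ^ 2)
        * f z.1 z.2 * (φ z.1 - ψ z.1)) volume)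
    (hintL : Integrable (fun x : E3 =>
      (inner ℝ (gradient ψ x) (gradient φ x - gradient ψ x) : ℝ)) volume)
    (hEL : (∫ x : E3, (inner ℝ (gradient ψ x) (gradient φ x - gradient ψ x) : ℝ))
      = - ∫ z : E3 × E3,
          Real.exp (2 * ψ z.1) / Real.sqrt (Real.exp (2 * ψ z.1) + ‖z.2‖ ^ 2)
            * f z.1 z.2 * (φ z.1 - ψ z.1)) :
    energy f ψ + ENNReal.ofReal ((1/2) * ∫ x : E3, ‖gradient φ x - gradient ψ x‖ ^ 2)
      ≤ energy f φ :=
  energy_gap_quadratic_general k M J f φ ψ hf hφ hψ hkinφ hkinψ hintR hintL hEL
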